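/- Let R = ℂ[x,y,z,w] localized at (x,y,z,w) and I = (x,y) ∩ (z,w). Then for every positive integer n, Iⁿ = (x,y)ⁿ ∩ (z,w)ⁿ and depth R/Iⁿ = 1. -/
import Mathlib

open MvPolynomial IsLocalRing Pointwise

noncomputable section
namespace DepthAux

local notation "A" => MvPolynomial (Fin 4) ℂ

/-- The monomial ideal of polynomials all of whose monomials `μ` satisfy `k ≤ μ i + μ j`. -/
def mIdeal (i j : Fin 4) (k : ℕ) : Ideal A where
  carrier := {f | ∀ μ ∈ f.support, k ≤ μ i + μ j}
  add_mem' := by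
    classical
    intro f g hf hg μ hμ
    rcases Finset.mem_union.mp (MvPolynomial.support_add hμ) with h | h
    exacts [hf μ h, hg μ h]
  zero_mem' := by simp
  smul_mem' := by
    classical
    intro r f hf μ hμ
    rw [smul_eq_mul] at hμ
    obtain ⟨α, hα, β, hβ, rfl⟩ := Finset.mem_add.mp (MvPolynomial.support_mul r f hμ)
    have := hf β hβ
    simp only [Finsupp.add_apply]
    omega

lemma mem_mIdeal {i j : Fin 4} {k : ℕ} {f : A} :
    f ∈ mIdeal i j k ↔ ∀ μ ∈ f.support, k ≤ μ i + μ j := Iff.rfl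

open Classical in
/-- The part of `f` of `(i,j)`-weight exactly `d`. -/
def comp (i j : Fin 4) (d : ℕ) (f : A) : A :=
  ∑ μ ∈ f.support.filter (fun μ => μ i + μ j = d), monomial μ (coeff μ f)

open Classical in
lemma coeff_comp {i j : Fin 4} {d : ℕ} {f : A} (ν : Fin 4 →₀ ℕ) :
    coeff ν (comp i j d f) = if ν i + ν j = d then coeff ν f else 0 := by
  rw [comp, coeff_sum]
  simp only [coeff_monomial]
  rw [Finset.sum_ite_eq' (f.support.filter fun μ => μ i + μ j = d) ν (fun μ => coeff μ f)]
  by_cases h1 : ν i + ν j = d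
  · by_cases h2 : ν ∈ f.support
    · rw [if_pos (Finset.mem_filter.mpr ⟨h2, h1⟩), if_pos h1]
    · have hn : ν ∉ f.support.filter (fun μ => μ i + μ j = d) :=
        fun h => h2 (Finset.mem_filter.mp h).1
      rw [if_neg hn, if_pos h1, MvPolynomial.notMem_support_iff.mp h2]
  · have hn : ν ∉ f.support.filter (fun μ => μ i + μ j = d) :=
      fun h => h1 (Finset.mem_filter.mp h).2
    rw [if_neg hn, if_neg h1]

lemma mul_mem_mIdeal_cancel {i j : Fin 4} {k : ℕ} {u f : A}
    (hu : u ∉ mIdeal i j 1) (huf : u * f ∈ mIdeal i j k) : f ∈ mIdeal i j k := by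
  classical
  by_contra hf
  obtain ⟨μbad, hμbad, hlt⟩ : ∃ μ ∈ f.support, μ i + μ j < k := by
    by_contra h; push_neg at h; exact hf fun μ hμ => h μ hμ
  obtain ⟨μ0, hμ0mem, hμ0deg⟩ : ∃ μ ∈ u.support, μ i + μ j = 0 := by
    by_contra h; push_neg at h
    exact hu fun μ hμ => by have := h μ hμ; omega
  set T := f.support.image (fun μ => μ i + μ j) with hT
  have hTne : T.Nonempty := ⟨_, Finset.mem_image_of_mem _ hμbad⟩
  set d := T.min' hTne with hd
  have hdlt : d < k :=
    lt_of_le_of_lt (Finset.min'_le T _ (Finset.mem_image_of_mem _ hμbad)) hlt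
  have hmin : ∀ β ∈ f.support, d ≤ β i + β j := fun β hβ =>
    Finset.min'_le T _ (Finset.mem_image_of_mem _ hβ)
  obtain ⟨μd, hμdmem, hμdeq⟩ := Finset.mem_image.mp (T.min'_mem hTne)
  have hu0 : comp i j 0 u ≠ 0 := by
    intro h
    have := coeff_comp (i := i) (j := j) (d := 0) (f := u) μ0
    rw [h, if_pos hμ0deg] at this
    exact mem_support_iff.mp hμ0mem this.symm
  have hfd : comp i j d f ≠ 0 := by
    intro h
    have := coeff_comp (i := i) (j := j) (d := d) (f := f) μd
    rw [h, if_pos hμdeq] at this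
    exact mem_support_iff.mp hμdmem this.symm
  have hprod : comp i j 0 u * comp i j d f ≠ 0 := mul_ne_zero hu0 hfd
  obtain ⟨ν, hν⟩ := Finset.nonempty_iff_ne_empty.mpr
    (fun h => hprod (support_eq_empty.mp h))
  obtain ⟨α, hα, β, hβ, rfl⟩ := Finset.mem_add.mp (support_mul _ _ hν)
  have hαc := mem_support_iff.mp hα
  rw [coeff_comp] at hαc
  have hα0 : α i + α j = 0 := by by_contra h; rw [if_neg h] at hαc; exact hαc rfl
  rw [if_pos hα0] at hαc
  have hβc := mem_support_iff.mp hβ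
  rw [coeff_comp] at hβc
  have hβd : β i + β j = d := by by_contra h; rw [if_neg h] at hβc; exact hβc rfl
  rw [if_pos hβd] at hβc
  have hcoeff : coeff (α + β) (u * f) =
      coeff (α + β) (comp i j 0 u * comp i j d f) := by
    rw [coeff_mul, coeff_mul]
    apply Finset.sum_congr rfl
    rintro ⟨γ, δ⟩ hmem
    have hγδ : γ + δ = α + β := Finset.HasAntidiagonal.mem_antidiagonal.mp hmem
    have hiγ : γ i + δ i = α i + β i := by
      have := congrArg (fun m => m i) hγδ; simpa [Finsupp.add_apply] using this
    have hjγ : γ j + δ j = α j + β j := by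
      have := congrArg (fun m => m j) hγδ; simpa [Finsupp.add_apply] using this
    simp only [coeff_comp]
    by_cases h0 : γ i + γ j = 0
    · have hδd : δ i + δ j = d := by omega
      rw [if_pos h0, if_pos hδd]
    · have hδlt : δ i + δ j < d := by omega
      have hδf : coeff δ f = 0 := by
        by_contra h
        exact absurd (hmin δ (mem_support_iff.mpr h)) (by omega)
      rw [if_neg h0, zero_mul, hδf, mul_zero]
  have hmemuf : α + β ∈ (u * f).support := by
    rw [mem_support_iff, hcoeff]
    exact mem_support_iff.mp hν
  have := huf _ hmemuf
  have : (α + β) i + (α + β) j = d := by simp only [Finsupp.add_apply]; omega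
  omega

abbrev J1 : Ideal A := Ideal.span {X 0, X 1}
abbrev J2 : Ideal A := Ideal.span {X 2, X 3}
abbrev Pid : Ideal A := Ideal.span {X 0, X 1, X 2, X 3}

lemma split_idx (μ : Fin 4 →₀ ℕ) :
    μ = Finsupp.single 0 (μ 0) + Finsupp.single 1 (μ 1) +
      (Finsupp.single 2 (μ 2) + Finsupp.single 3 (μ 3) + 0) := by
  ext l
  fin_cases l <;> simp [Finsupp.add_apply, Finsupp.single_apply]

lemma monomial_factor (μ : Fin 4 →₀ ℕ) (cc : ℂ) :
    monomial μ cc = (X 0 ^ μ 0 * X 1 ^ μ 1) * ((X (2 : Fin 4) ^ μ 2 * X 3 ^ μ 3) * C cc) := by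
  rw [X_pow_eq_monomial, X_pow_eq_monomial, X_pow_eq_monomial, X_pow_eq_monomial,
    C_apply, monomial_mul, monomial_mul, monomial_mul, monomial_mul]
  rw [show (1 : ℂ) * 1 * (1 * 1 * cc) = cc by ring]
  conv_lhs => rw [split_idx μ]

lemma monomial_factor' (μ : Fin 4 →₀ ℕ) (cc : ℂ) :
    monomial μ cc = (X (2 : Fin 4) ^ μ 2 * X 3 ^ μ 3) * ((X 0 ^ μ 0 * X 1 ^ μ 1) * C cc) := by
  rw [monomial_factor]; ring

lemma span_pair_le_mIdeal_one {i j : Fin 4} (hij : i ≠ j) :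
    Ideal.span {X i, X j} ≤ mIdeal i j 1 := by
  rw [Ideal.span_le]
  rintro p hp
  simp only [Set.mem_insert_iff, Set.mem_singleton_iff] at hp
  rcases hp with rfl | rfl <;> intro μ hμ <;>
    rw [support_X, Finset.mem_singleton] at hμ <;> subst hμ <;>
    simp [Finsupp.single_apply, hij, hij.symm]

lemma mIdeal_mul_le {i j : Fin 4} {a b : ℕ} :
    mIdeal i j a * mIdeal i j b ≤ mIdeal i j (a + b) := by
  classical
  rw [Ideal.mul_le]
  intro r hr s hs μ hμ
  obtain ⟨α, hα, β, hβ, rfl⟩ := Finset.mem_add.mp (support_mul r s hμ)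
  have h1 := hr α hα
  have h2 := hs β hβ
  simp only [Finsupp.add_apply]
  omega

lemma X_pow_pair_mem {i j : Fin 4} (a b k : ℕ) (hk : k ≤ a + b) :
    X (R := ℂ) i ^ a * X j ^ b ∈ Ideal.span {X (R := ℂ) i, X j} ^ k := by
  refine Ideal.pow_le_pow_right hk ?_
  rw [pow_add]
  exact Ideal.mul_mem_mul
    (Ideal.pow_mem_pow (Ideal.subset_span (by simp)) _)
    (Ideal.pow_mem_pow (Ideal.subset_span (by simp)) _)

lemma mIdeal01_le (k : ℕ) : mIdeal 0 1 k ≤ J1 ^ k := by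
  intro f hf
  rw [← support_sum_monomial_coeff f]
  refine Submodule.sum_mem _ fun μ hμ => ?_
  rw [monomial_factor]
  exact Ideal.mul_mem_right _ _ (X_pow_pair_mem _ _ _ (hf μ hμ))

lemma mIdeal23_le (k : ℕ) : mIdeal 2 3 k ≤ J2 ^ k := by
  intro f hf
  rw [← support_sum_monomial_coeff f]
  refine Submodule.sum_mem _ fun μ hμ => ?_
  rw [monomial_factor']
  exact Ideal.mul_mem_right _ _ (X_pow_pair_mem _ _ _ (hf μ hμ))

lemma span01_pow (k : ℕ) : J1 ^ k = mIdeal 0 1 k := by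
  refine le_antisymm ?_ (mIdeal01_le k)
  induction k with
  | zero => rw [pow_zero, Ideal.one_eq_top]; intro f _ μ _; exact Nat.zero_le _
  | succ k ih =>
      rw [pow_succ]
      exact le_trans (Ideal.mul_mono ih (span_pair_le_mIdeal_one (by decide))) mIdeal_mul_le

lemma span23_pow (k : ℕ) : J2 ^ k = mIdeal 2 3 k := by
  refine le_antisymm ?_ (mIdeal23_le k)
  induction k with
  | zero => rw [pow_zero, Ideal.one_eq_top]; intro f _ μ _; exact Nat.zero_le _
  | succ k ih =>
      rw [pow_succ]
      exact le_trans (Ideal.mul_mono ih (span_pair_le_mIdeal_one (by decide))) mIdeal_mul_le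

lemma inf_le_mul (a b : ℕ) : mIdeal 0 1 a ⊓ mIdeal 2 3 b ≤ J1 ^ a * J2 ^ b := by
  rintro f ⟨h1, h2⟩
  rw [← support_sum_monomial_coeff f]
  refine Submodule.sum_mem _ fun μ hμ => ?_
  rw [monomial_factor]
  exact Ideal.mul_mem_mul (X_pow_pair_mem _ _ _ (h1 μ hμ))
    (Ideal.mul_mem_right _ _ (X_pow_pair_mem _ _ _ (h2 μ hμ)))

lemma part1A (n : ℕ) : (J1 ⊓ J2) ^ n = J1 ^ n ⊓ J2 ^ n := by
  have h11 : J1 ⊓ J2 = J1 * J2 := by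
    refine le_antisymm ?_ Ideal.mul_le_inf
    have := inf_le_mul 1 1
    rwa [← span01_pow 1, ← span23_pow 1, pow_one, pow_one] at this
  have h2 : J1 ^ n * J2 ^ n = J1 ^ n ⊓ J2 ^ n := by
    refine le_antisymm Ideal.mul_le_inf ?_
    have := inf_le_mul n n
    rwa [← span01_pow n, ← span23_pow n] at this
  rw [h11, mul_pow, h2]

lemma monomial_mem_P {μ : Fin 4 →₀ ℕ} (cc : ℂ) (l : Fin 4) (hl : μ l ≠ 0) :
    monomial μ cc ∈ Pid := by
  have hidx : (μ - Finsupp.single l 1) + Finsupp.single l 1 = μ := by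
    ext l'
    by_cases h : l' = l
    · subst h
      simp only [Finsupp.add_apply, Finsupp.tsub_apply, Finsupp.single_apply, if_pos rfl,
        if_true]
      omega
    · simp [Finsupp.add_apply, Finsupp.tsub_apply, Finsupp.single_apply, Ne.symm h]
  have hfac : monomial μ cc = monomial (μ - Finsupp.single l 1) cc * X l := by
    rw [X, monomial_mul, mul_one, hidx]
  rw [hfac]
  refine Ideal.mul_mem_left _ _ (Ideal.subset_span ?_)
  fin_cases l <;> simp

lemma mem_P_of_coeff_zero {s : A} (h : coeff 0 s = 0) : s ∈ Pid := by
  rw [← support_sum_monomial_coeff s]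
  refine Submodule.sum_mem _ fun μ hμ => ?_
  have hμ0 : μ ≠ 0 := by rintro rfl; exact (mem_support_iff.mp hμ) h
  obtain ⟨l, hl⟩ : ∃ l, μ l ≠ 0 := by
    by_contra h'; push_neg at h'; exact hμ0 (Finsupp.ext h')
  exact monomial_mem_P _ l hl

lemma coeff_zero_ne_of_notMem_P {s : A} (h : s ∉ Pid) : coeff 0 s ≠ 0 :=
  fun hc => h (mem_P_of_coeff_zero hc)

lemma notMem_mIdeal01_of_notMem_P {s : A} (h : s ∉ Pid) : s ∉ mIdeal 0 1 1 := by
  intro hs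
  apply h
  rw [← span01_pow 1, pow_one] at hs
  refine Ideal.span_mono ?_ hs
  intro x hx
  simp only [Set.mem_insert_iff, Set.mem_singleton_iff] at hx
  rcases hx with rfl | rfl <;> simp

lemma notMem_mIdeal23_of_notMem_P {s : A} (h : s ∉ Pid) : s ∉ mIdeal 2 3 1 := by
  intro hs
  apply h
  rw [← span23_pow 1, pow_one] at hs
  refine Ideal.span_mono ?_ hs
  intro x hx
  simp only [Set.mem_insert_iff, Set.mem_singleton_iff] at hx
  rcases hx with rfl | rfl <;> simp

section Loc

variable (P : Ideal A) [P.IsPrime]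

local notation "Rl" => Localization.AtPrime P

lemma primeCompl_le_nzd : P.primeCompl ≤ nonZeroDivisors A := fun s hs =>
  mem_nonZeroDivisors_of_ne_zero (fun h => hs (h ▸ P.zero_mem))

lemma algebraMap_loc_inj : Function.Injective (algebraMap A Rl) :=
  IsLocalization.injective _ (primeCompl_le_nzd P)

lemma exists_smul_mem {Q : Ideal A} {a : A}
    (h : algebraMap A Rl a ∈ Q.map (algebraMap A Rl)) :
    ∃ s ∈ P.primeCompl, s * a ∈ Q := by
  rw [IsLocalization.mem_map_algebraMap_iff P.primeCompl] at h
  obtain ⟨⟨b, s⟩, e⟩ := h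
  refine ⟨s, s.2, ?_⟩
  have h1 : algebraMap A Rl (a * ↑s) = algebraMap A Rl ↑b := by rw [map_mul]; exact e
  have h2 : a * ↑s = ↑b := algebraMap_loc_inj P h1
  rw [mul_comm, h2]
  exact b.2

lemma mem_of_mul_unit {K : Ideal Rl} {t : Rl} {s : A} (hs : s ∈ P.primeCompl)
    (h : t * algebraMap A Rl s ∈ K) : t ∈ K := by
  obtain ⟨v, hv⟩ := IsLocalization.map_units Rl ⟨s, hs⟩
  have he : t = (t * algebraMap A Rl s) * ↑v⁻¹ := by
    rw [mul_assoc]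
    simp only [← hv]
    rw [Units.mul_inv, mul_one]
  rw [he]
  exact K.mul_mem_right _ h

lemma map_inf_loc (Q1 Q2 : Ideal A) :
    (Q1 ⊓ Q2).map (algebraMap A Rl) =
      Q1.map (algebraMap A Rl) ⊓ Q2.map (algebraMap A Rl) := by
  refine le_antisymm (le_inf (Ideal.map_mono inf_le_left) (Ideal.map_mono inf_le_right)) ?_
  rintro t ⟨h1, h2⟩
  obtain ⟨⟨a, s⟩, e⟩ := IsLocalization.surj P.primeCompl t
  have ha1 : algebraMap A Rl a ∈ Q1.map (algebraMap A Rl) := e ▸ Ideal.mul_mem_right _ _ h1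
  have ha2 : algebraMap A Rl a ∈ Q2.map (algebraMap A Rl) := e ▸ Ideal.mul_mem_right _ _ h2
  obtain ⟨s1, hs1, hs1a⟩ := exists_smul_mem P ha1
  obtain ⟨s2, hs2, hs2a⟩ := exists_smul_mem P ha2
  have hmem : (s1 * s2) * a ∈ Q1 ⊓ Q2 := by
    constructor
    · rw [show s1 * s2 * a = s2 * (s1 * a) by ring]; exact Q1.mul_mem_left _ hs1a
    · rw [show s1 * s2 * a = s1 * (s2 * a) by ring]; exact Q2.mul_mem_left _ hs2a
  have key : t * algebraMap A Rl (↑s * (s1 * s2)) = algebraMap A Rl ((s1 * s2) * a) := by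
    rw [map_mul, ← mul_assoc, e, ← map_mul, mul_comm a (s1 * s2)]
  have hmm : t * algebraMap A Rl (↑s * (s1 * s2)) ∈ (Q1 ⊓ Q2).map (algebraMap A Rl) :=
    key ▸ Ideal.mem_map_of_mem _ hmem
  exact mem_of_mul_unit P (Submonoid.mul_mem _ s.2 (Submonoid.mul_mem _ hs1 hs2)) hmm

lemma loc_notMem {Q : Ideal A} {a : A} (h : ∀ s, s ∈ P.primeCompl → s * a ∉ Q) :
    algebraMap A Rl a ∉ Q.map (algebraMap A Rl) := by
  intro hmem
  obtain ⟨s, hs, h'⟩ := exists_smul_mem P hmem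
  exact h s hs h'

lemma loc_cancel (i j : Fin 4) (k : ℕ) {u : A}
    (hPij : ∀ s, s ∈ P.primeCompl → s ∉ mIdeal i j 1) (hu : u ∉ mIdeal i j 1) {t : Rl}
    (h : algebraMap A Rl u * t ∈ (mIdeal i j k).map (algebraMap A Rl)) :
    t ∈ (mIdeal i j k).map (algebraMap A Rl) := by
  obtain ⟨⟨a, s⟩, e⟩ := IsLocalization.surj P.primeCompl t
  have h2 : algebraMap A Rl (u * a) ∈ (mIdeal i j k).map (algebraMap A Rl) := by
    rw [map_mul, ← e, ← mul_assoc]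
    exact Ideal.mul_mem_right _ _ h
  obtain ⟨s', hs', hs'a⟩ := exists_smul_mem P h2
  have ha : a ∈ mIdeal i j k := by
    exact mul_mem_mIdeal_cancel hu (mul_mem_mIdeal_cancel (hPij s' hs') hs'a)
  have hmm : t * algebraMap A Rl ↑s ∈ (mIdeal i j k).map (algebraMap A Rl) :=
    e ▸ Ideal.mem_map_of_mem _ ha
  exact mem_of_mul_unit P s.2 hmm

end Loc

section QuotHelp

variable {R : Type} [CommRing R] (L : Ideal R)

lemma smul_mk (r x : R) :
    r • (Ideal.Quotient.mk L x) = Ideal.Quotient.mk L (r * x) := by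
  have h := Submodule.Quotient.mk_smul L r x
  rw [smul_eq_mul] at h
  exact h.symm

lemma quot_mem_smul_top_iff (ρ x : R) :
    Ideal.Quotient.mk L x ∈ ρ • (⊤ : Submodule R (R ⧸ L)) ↔ x ∈ L ⊔ Ideal.span {ρ} := by
  constructor
  · intro h
    rw [← SetLike.mem_coe, Submodule.coe_pointwise_smul, Set.mem_smul_set] at h
    obtain ⟨y, -, hy⟩ := h
    obtain ⟨w, rfl⟩ := Ideal.Quotient.mk_surjective y
    rw [smul_mk] at hy
    have hxw : ρ * w - x ∈ L := (Ideal.Quotient.eq).mp hy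
    have hx : x = (x - ρ * w) + w * ρ := by ring
    rw [hx]
    refine Submodule.add_mem _ (Ideal.mem_sup_left ?_)
      (Ideal.mem_sup_right (Ideal.mem_span_singleton'.mpr ⟨w, rfl⟩))
    have he : x - ρ * w = -(ρ * w - x) := by ring
    rw [he]
    exact neg_mem hxw
  · intro h
    obtain ⟨l, hl, q, hq, rfl⟩ := Submodule.mem_sup.mp h
    obtain ⟨w, rfl⟩ := Ideal.mem_span_singleton'.mp hq
    rw [map_add, Ideal.Quotient.eq_zero_iff_mem.mpr hl, zero_add]
    have he : Ideal.Quotient.mk L (w * ρ) = ρ • Ideal.Quotient.mk L w := by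
      rw [smul_mk, mul_comm]
    rw [he]
    exact Submodule.smul_mem_pointwise_smul _ _ _ Submodule.mem_top

lemma unit_smul_top {Mm : Type*} [AddCommGroup Mm] [Module R Mm] {u : R} (hu : IsUnit u) :
    u • (⊤ : Submodule R Mm) = ⊤ := by
  refine eq_top_iff.mpr fun x _ => ?_
  obtain ⟨v, rfl⟩ := hu
  have hx : x = (v : R) • ((↑v⁻¹ : R) • x) := by
    rw [smul_smul, Units.mul_inv, one_smul]
  rw [hx]
  exact Submodule.smul_mem_pointwise_smul _ _ _ Submodule.mem_top

end QuotHelp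

lemma monomial_mem_mIdeal {i j : Fin 4} {k : ℕ} {μ : Fin 4 →₀ ℕ} {cc : ℂ}
    (h : k ≤ μ i + μ j) : monomial μ cc ∈ mIdeal i j k := by
  intro ν hν
  rw [mem_support_iff, coeff_monomial] at hν
  by_cases h' : μ = ν
  · rw [← h']; exact h
  · rw [if_neg h'] at hν; exact absurd rfl hν

lemma monomial_notMem_mIdeal {i j : Fin 4} {k : ℕ} {μ : Fin 4 →₀ ℕ}
    (h : μ i + μ j < k) : (monomial μ (1 : ℂ)) ∉ mIdeal i j k := by
  intro hm
  have hμ : μ ∈ (monomial μ (1 : ℂ)).support := by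
    rw [mem_support_iff, coeff_monomial, if_pos rfl]; exact one_ne_zero
  have := hm μ hμ
  omega

lemma mul_monomial_mem {i j : Fin 4} {a k : ℕ} {u : A} (hu : u ∈ mIdeal i j a)
    {μ : Fin 4 →₀ ℕ} {cc : ℂ} (h : k ≤ a + (μ i + μ j)) :
    u * monomial μ cc ∈ mIdeal i j k := by
  classical
  intro ν hν
  obtain ⟨α, hα, β, hβ, rfl⟩ := Finset.mem_add.mp (support_mul _ _ hν)
  have h1 := hu α hα
  have h2 : β = μ := by
    rw [mem_support_iff, coeff_monomial] at hβ
    by_cases h' : μ = β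
    · exact h'.symm
    · rw [if_neg h'] at hβ; exact absurd rfl hβ
  subst h2
  simp only [Finsupp.add_apply]
  omega

lemma mem_mIdeal_zero {i j : Fin 4} (u : A) : u ∈ mIdeal i j 0 := fun _ _ => Nat.zero_le _

section Main

variable (P : Ideal A) [P.IsPrime]

local notation "φP" => algebraMap A (Localization.AtPrime P)

lemma notMem_mI01 (hP : P = Pid) {s : A} (hs : s ∈ P.primeCompl) : s ∉ mIdeal 0 1 1 :=
  notMem_mIdeal01_of_notMem_P (fun hm => hs (hP ▸ hm : s ∈ P))

lemma notMem_mI23 (hP : P = Pid) {s : A} (hs : s ∈ P.primeCompl) : s ∉ mIdeal 2 3 1 :=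
  notMem_mIdeal23_of_notMem_P (fun hm => hs (hP ▸ hm : s ∈ P))

/-- `L = (map J1 ⊓ map J2)^n` equals the image of the monomial ideal intersection. -/
lemma L_eq (n : ℕ) :
    (J1.map φP ⊓ J2.map φP) ^ n = (mIdeal 0 1 n ⊓ mIdeal 2 3 n).map φP := by
  rw [← map_inf_loc, ← Ideal.map_pow, part1A n, span01_pow, span23_pow, map_inf_loc]

lemma part1_loc (n : ℕ) :
    (J1.map φP ⊓ J2.map φP) ^ n = (J1.map φP) ^ n ⊓ (J2.map φP) ^ n := by
  rw [← map_inf_loc, ← Ideal.map_pow, part1A n, map_inf_loc, Ideal.map_pow, Ideal.map_pow]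

end Main

section Main2

variable (P : Ideal A) [P.IsPrime]

local notation "φP" => algebraMap A (Localization.AtPrime P)
local notation "Rl" => Localization.AtPrime P

set_option maxHeartbeats 1000000 in
lemma no_two (hP : P = Pid) {n : ℕ} (hn : 0 < n) (r1 r2 : Rl)
    (h1mem : r1 ∈ IsLocalRing.maximalIdeal Rl)
    (h2mem : r2 ∈ IsLocalRing.maximalIdeal Rl)
    (hr1 : IsSMulRegular (Rl ⧸ (J1.map φP ⊓ J2.map φP) ^ n) r1)
    (hr2 : IsSMulRegular (QuotSMulTop r1 (Rl ⧸ (J1.map φP ⊓ J2.map φP) ^ n)) r2) :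
    False := by
  classical
  set L : Ideal Rl := (J1.map φP ⊓ J2.map φP) ^ n with hLdef
  set K1 : Ideal Rl := (mIdeal 0 1 n).map φP with hK1def
  set K2 : Ideal Rl := (mIdeal 2 3 n).map φP with hK2def
  have hL : L = (mIdeal 0 1 n ⊓ mIdeal 2 3 n).map φP := L_eq P n
  have hLK : L = K1 ⊓ K2 := by rw [hL, map_inf_loc, hK1def, hK2def]
  have hLK1 : L ≤ K1 := hLK ▸ inf_le_left
  have hLK2 : L ≤ K2 := hLK ▸ inf_le_right
  rw [← Localization.AtPrime.map_eq_maximalIdeal,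
    IsLocalization.mem_map_algebraMap_iff P.primeCompl] at h1mem h2mem
  obtain ⟨⟨u1, s1⟩, e1⟩ := h1mem
  obtain ⟨⟨u2, s2⟩, e2⟩ := h2mem
  have hreg1 : IsSMulRegular (Rl ⧸ L) (φP ↑u1) := by
    rw [← e1]
    exact hr1.mul ((IsLocalization.map_units Rl s1).isSMulRegular (Rl ⧸ L))
  have htop : r1 • (⊤ : Submodule Rl (Rl ⧸ L)) = (φP ↑u1) • ⊤ := by
    rw [← e1, mul_smul, unit_smul_top (IsLocalization.map_units Rl s1)]
  have hr2' : IsSMulRegular ((Rl ⧸ L) ⧸ (φP ↑u1) • (⊤ : Submodule Rl (Rl ⧸ L))) r2 := by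
    rw [← htop]; exact hr2
  have hreg2 : IsSMulRegular ((Rl ⧸ L) ⧸ (φP ↑u1) • (⊤ : Submodule Rl (Rl ⧸ L))) (φP ↑u2) := by
    rw [← e2]
    exact hr2'.mul ((IsLocalization.map_units Rl s2).isSMulRegular ((Rl ⧸ L) ⧸ (φP ↑u1) • (⊤ : Submodule Rl (Rl ⧸ L))))
  -- zero test in Rl ⧸ L
  have hmk0 : ∀ a : A, a ∈ mIdeal 0 1 n ⊓ mIdeal 2 3 n →
      Ideal.Quotient.mk L (φP a) = 0 := by
    intro a ha
    rw [Ideal.Quotient.eq_zero_iff_mem, hL]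
    exact Ideal.mem_map_of_mem _ ha
  -- if u1 were in (x,y), it would be a zerodivisor: witness x^{n-1} z^n
  have hu1a : (↑u1 : A) ∉ mIdeal 0 1 1 := by
    intro hmem
    set g : A := monomial (Finsupp.single 0 (n-1) + Finsupp.single 2 n) 1 with hg
    have hg1 : (↑u1 : A) * g ∈ mIdeal 0 1 n ⊓ mIdeal 2 3 n := by
      constructor
      · refine mul_monomial_mem hmem ?_
        simp [Finsupp.add_apply, Finsupp.single_apply]
        omega
      · refine mul_monomial_mem (mem_mIdeal_zero (i := 2) (j := 3) _) ?_
        simp [Finsupp.add_apply, Finsupp.single_apply]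
    have hz : φP ↑u1 • Ideal.Quotient.mk L (φP g) = φP ↑u1 • (0 : Rl ⧸ L) := by
      rw [smul_mk, smul_zero, ← map_mul]
      exact hmk0 _ hg1
    have hgL : φP g ∈ L := by
      have := hreg1 hz
      rwa [Ideal.Quotient.eq_zero_iff_mem] at this
    rw [hL] at hgL
    obtain ⟨s, hs, hsg⟩ := exists_smul_mem P hgL
    have hgmem : g ∈ mIdeal 0 1 n :=
      mul_mem_mIdeal_cancel (notMem_mI01 P hP hs) hsg.1
    refine monomial_notMem_mIdeal (i := 0) (j := 1) (k := n) ?_ hgmem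
    simp [Finsupp.add_apply, Finsupp.single_apply]
    omega
  -- if u1 were in (z,w): witness x^n z^{n-1}
  have hu1b : (↑u1 : A) ∉ mIdeal 2 3 1 := by
    intro hmem
    set g : A := monomial (Finsupp.single 0 n + Finsupp.single 2 (n-1)) 1 with hg
    have hg1 : (↑u1 : A) * g ∈ mIdeal 0 1 n ⊓ mIdeal 2 3 n := by
      constructor
      · refine mul_monomial_mem (mem_mIdeal_zero (i := 0) (j := 1) _) ?_
        simp [Finsupp.add_apply, Finsupp.single_apply]
      · refine mul_monomial_mem hmem ?_
        simp [Finsupp.add_apply, Finsupp.single_apply]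
        omega
    have hz : φP ↑u1 • Ideal.Quotient.mk L (φP g) = φP ↑u1 • (0 : Rl ⧸ L) := by
      rw [smul_mk, smul_zero, ← map_mul]
      exact hmk0 _ hg1
    have hgL : φP g ∈ L := by
      have := hreg1 hz
      rwa [Ideal.Quotient.eq_zero_iff_mem] at this
    rw [hL] at hgL
    obtain ⟨s, hs, hsg⟩ := exists_smul_mem P hgL
    have hgmem : g ∈ mIdeal 2 3 n :=
      mul_mem_mIdeal_cancel (notMem_mI23 P hP hs) hsg.2
    refine monomial_notMem_mIdeal (i := 2) (j := 3) (k := n) ?_ hgmem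
    simp [Finsupp.add_apply, Finsupp.single_apply]
    omega
  -- the socle element c = x^{n-1} z^{n-1}
  set μc : Fin 4 →₀ ℕ := Finsupp.single 0 (n-1) + Finsupp.single 2 (n-1) with hμc
  set c : A := monomial μc 1 with hc
  -- c is not in K1 ⊔ K2
  have hcnot : φP c ∉ K1 ⊔ K2 := by
    rw [hK1def, hK2def, ← Ideal.map_sup]
    refine loc_notMem P ?_
    intro s hs hmem
    obtain ⟨q1, hq1, q2, hq2, heq⟩ := Submodule.mem_sup.mp hmem
    have h0 : coeff μc (s * c) = coeff 0 s := by
      have h' := coeff_mul_monomial (0 : Fin 4 →₀ ℕ) μc (1 : ℂ) s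
      rw [zero_add, mul_one] at h'
      rw [hc, h']
    have hz1 : coeff μc q1 = 0 := by
      by_contra hcon
      have := hq1 μc (mem_support_iff.mpr hcon)
      simp [hμc, Finsupp.add_apply, Finsupp.single_apply] at this
      omega
    have hz2 : coeff μc q2 = 0 := by
      by_contra hcon
      have := hq2 μc (mem_support_iff.mpr hcon)
      simp [hμc, Finsupp.add_apply, Finsupp.single_apply] at this
      omega
    have : coeff μc (s * c) = 0 := by
      rw [← heq, coeff_add, hz1, hz2, add_zero]
    rw [h0] at this
    exact coeff_zero_ne_of_notMem_P (fun hm => hs (hP ▸ hm : s ∈ P)) this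
  -- P · c ⊆ Q1 ⊔ Q2
  have hPc : ∀ p ∈ P, p * c ∈ mIdeal 0 1 n ⊔ mIdeal 2 3 n := by
    intro p hp
    have hcol : Pid ≤ (mIdeal 0 1 n ⊔ mIdeal 2 3 n).colon (Ideal.span {c}) := by
      rw [Ideal.span_le]
      rintro q hq
      simp only [Set.mem_insert_iff, Set.mem_singleton_iff] at hq
      have hx : ∀ l : Fin 4, (X l : A) * c = monomial (Finsupp.single l 1 + μc) 1 := by
        intro l
        rw [hc, X, monomial_mul, one_mul]
      rcases hq with rfl | rfl | rfl | rfl <;>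
          rw [SetLike.mem_coe, Ideal.mem_colon_span_singleton, hx]
      · refine Ideal.mem_sup_left (monomial_mem_mIdeal ?_)
        simp [hμc, Finsupp.add_apply, Finsupp.single_apply]
        omega
      · refine Ideal.mem_sup_left (monomial_mem_mIdeal ?_)
        simp [hμc, Finsupp.add_apply, Finsupp.single_apply]
        omega
      · refine Ideal.mem_sup_right (monomial_mem_mIdeal ?_)
        simp [hμc, Finsupp.add_apply, Finsupp.single_apply]
        omega
      · refine Ideal.mem_sup_right (monomial_mem_mIdeal ?_)
        simp [hμc, Finsupp.add_apply, Finsupp.single_apply]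
        omega
    exact Ideal.mem_colon_span_singleton.mp (hcol (hP ▸ hp))
  -- decompose u_i * c
  have hd1 : φP (↑u1 * c) ∈ K1 ⊔ K2 := by
    rw [hK1def, hK2def, ← Ideal.map_sup]
    exact Ideal.mem_map_of_mem _ (hPc _ u1.2)
  have hd2 : φP (↑u2 * c) ∈ K1 ⊔ K2 := by
    rw [hK1def, hK2def, ← Ideal.map_sup]
    exact Ideal.mem_map_of_mem _ (hPc _ u2.2)
  obtain ⟨a, haK, b, hbK, hab⟩ := Submodule.mem_sup.mp hd1
  obtain ⟨a', ha'K, b', hb'K, ha'b'⟩ := Submodule.mem_sup.mp hd2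
  -- cross relation
  have h3 : φP ↑u2 * φP (↑u1 * c) = φP ↑u1 * φP (↑u2 * c) := by
    rw [← map_mul, ← map_mul]
    ring_nf
  have hcross : φP ↑u2 * a - φP ↑u1 * a' ∈ L := by
    rw [hLK]
    constructor
    · exact Submodule.sub_mem _ (K1.mul_mem_left _ haK) (K1.mul_mem_left _ ha'K)
    · have heq2 : φP ↑u2 * a - φP ↑u1 * a' = φP ↑u1 * b' - φP ↑u2 * b := by
        linear_combination (φP ↑u2) * hab - (φP ↑u1) * ha'b' + h3
      rw [heq2]
      exact Submodule.sub_mem _ (K2.mul_mem_left _ hb'K) (K2.mul_mem_left _ hbK)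
  have hsum2 : φP ↑u2 * a ∈ L ⊔ Ideal.span {φP ↑u1} := by
    have he : φP ↑u2 * a = (φP ↑u2 * a - φP ↑u1 * a') + a' * φP ↑u1 := by ring
    rw [he]
    exact Submodule.add_mem _ (Ideal.mem_sup_left hcross)
      (Ideal.mem_sup_right (Ideal.mem_span_singleton'.mpr ⟨a', rfl⟩))
  -- apply regularity of u2 on the double quotient
  have hz2 : (Submodule.Quotient.mk (Ideal.Quotient.mk L a) :
      (Rl ⧸ L) ⧸ (φP ↑u1) • (⊤ : Submodule Rl (Rl ⧸ L))) = 0 := by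
    refine hreg2 (show (φP ↑u2) • _ = (φP ↑u2) • (0 :
      (Rl ⧸ L) ⧸ (φP ↑u1) • (⊤ : Submodule Rl (Rl ⧸ L))) from ?_)
    rw [smul_zero, ← Submodule.Quotient.mk_smul, smul_mk]
    rw [Submodule.Quotient.mk_eq_zero]
    exact (quot_mem_smul_top_iff L _ _).mpr hsum2
  have haL : a ∈ L ⊔ Ideal.span {φP ↑u1} := by
    rw [Submodule.Quotient.mk_eq_zero] at hz2
    exact (quot_mem_smul_top_iff L _ _).mp hz2
  obtain ⟨l, hl, q, hq, haeq⟩ := Submodule.mem_sup.mp haL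
  obtain ⟨w, hweq⟩ := Ideal.mem_span_singleton'.mp hq
  -- w ∈ K1
  have hw1 : φP ↑u1 * w ∈ K1 := by
    have he : φP ↑u1 * w = a - l := by rw [← haeq, ← hweq]; ring
    rw [he]
    exact Submodule.sub_mem _ haK (hLK1 hl)
  have hwK1 : w ∈ K1 := by
    rw [hK1def] at hw1 ⊢
    exact loc_cancel P 0 1 n (fun s hs => notMem_mI01 P hP hs) hu1a hw1
  -- φP c - w ∈ K2
  have hcw : φP ↑u1 * (φP c - w) ∈ K2 := by
    have h6 : φP ↑u1 * φP c = a + b := by rw [← map_mul]; exact hab.symm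
    have he : φP ↑u1 * (φP c - w) = b + l := by
      have e4 : φP ↑u1 * w = a - l := by rw [← haeq, ← hweq]; ring
      linear_combination h6 - e4
    rw [he]
    exact Submodule.add_mem _ hbK (hLK2 hl)
  have hcwK2 : φP c - w ∈ K2 := by
    rw [hK2def] at hcw ⊢
    exact loc_cancel P 2 3 n (fun s hs => notMem_mI23 P hP hs) hu1b hcw
  -- contradiction
  refine hcnot ?_
  have he : φP c = w + (φP c - w) := by ring
  rw [he]
  exact Submodule.add_mem _ (Ideal.mem_sup_left hwK1) (Ideal.mem_sup_right hcwK2)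

end Main2

lemma mIdeal_anti {i j : Fin 4} {k k' : ℕ} (h : k' ≤ k) : mIdeal i j k ≤ mIdeal i j k' :=
  fun f hf μ hμ => le_trans h (hf μ hμ)

lemma mIdeal01_one_le_P : mIdeal 0 1 1 ≤ Pid := by
  intro f hf
  by_contra hs
  exact notMem_mIdeal01_of_notMem_P hs hf

section Main3

variable (P : Ideal A) [P.IsPrime]

local notation "φP" => algebraMap A (Localization.AtPrime P)
local notation "Rl" => Localization.AtPrime P

lemma xz_mem_max (hP : P = Pid) : φP (X 0 + X 2) ∈ IsLocalRing.maximalIdeal Rl := by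
  rw [← Localization.AtPrime.map_eq_maximalIdeal]
  refine Ideal.mem_map_of_mem _ ?_
  rw [hP]
  exact Ideal.add_mem _ (Ideal.subset_span (by simp)) (Ideal.subset_span (by simp))

lemma xz_not01 : (X (0 : Fin 4) + X 2 : A) ∉ mIdeal 0 1 1 := by
  intro h
  classical
  have hco : coeff (Finsupp.single (2 : Fin 4) 1) (X (0 : Fin 4) + X 2 : A) = 1 := by
    rw [coeff_add, coeff_X', coeff_X']
    simp [Finsupp.single_eq_single_iff]
  have hmem : Finsupp.single (2 : Fin 4) 1 ∈ (X (0 : Fin 4) + X 2 : A).support :=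
    mem_support_iff.mpr (by rw [hco]; exact one_ne_zero)
  have := h _ hmem
  simp [Finsupp.single_apply] at this

lemma xz_not23 : (X (0 : Fin 4) + X 2 : A) ∉ mIdeal 2 3 1 := by
  intro h
  classical
  have hco : coeff (Finsupp.single (0 : Fin 4) 1) (X (0 : Fin 4) + X 2 : A) = 1 := by
    rw [coeff_add, coeff_X', coeff_X']
    simp [Finsupp.single_eq_single_iff]
  have hmem : Finsupp.single (0 : Fin 4) 1 ∈ (X (0 : Fin 4) + X 2 : A).support :=
    mem_support_iff.mpr (by rw [hco]; exact one_ne_zero)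
  have := h _ hmem
  simp [Finsupp.single_apply] at this

lemma xz_regular_aux (hP : P = Pid) (n : ℕ) :
    ∀ t : Rl, φP (X 0 + X 2) * t ∈ (J1.map φP ⊓ J2.map φP) ^ n →
      t ∈ (J1.map φP ⊓ J2.map φP) ^ n := by
  intro t ht
  rw [L_eq P n] at ht ⊢
  obtain ⟨⟨a0, s⟩, e⟩ := IsLocalization.surj P.primeCompl t
  have h2 : φP ((X 0 + X 2) * a0) ∈ (mIdeal 0 1 n ⊓ mIdeal 2 3 n).map φP := by
    rw [map_mul, ← e, ← mul_assoc]
    exact Ideal.mul_mem_right _ _ ht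
  obtain ⟨s', hs', hs'a⟩ := exists_smul_mem P h2
  have ha : a0 ∈ mIdeal 0 1 n ⊓ mIdeal 2 3 n := by
    constructor
    · exact mul_mem_mIdeal_cancel xz_not01
        (mul_mem_mIdeal_cancel (notMem_mI01 P hP hs') hs'a.1)
    · exact mul_mem_mIdeal_cancel xz_not23
        (mul_mem_mIdeal_cancel (notMem_mI23 P hP hs') hs'a.2)
  have hmm : t * φP ↑s ∈ (mIdeal 0 1 n ⊓ mIdeal 2 3 n).map φP :=
    e ▸ Ideal.mem_map_of_mem _ ha
  exact mem_of_mul_unit P s.2 hmm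

set_option maxHeartbeats 1000000 in
lemma xz_isRegular (hP : P = Pid) {n : ℕ} (hn : 0 < n) :
    RingTheory.Sequence.IsRegular (Rl ⧸ (J1.map φP ⊓ J2.map φP) ^ n)
      [φP (X 0 + X 2)] := by
  constructor
  · rw [RingTheory.Sequence.isWeaklyRegular_cons_iff]
    constructor
    · intro x y hxy
      obtain ⟨tx, rfl⟩ := Ideal.Quotient.mk_surjective x
      obtain ⟨ty, rfl⟩ := Ideal.Quotient.mk_surjective y
      have hxy' : Ideal.Quotient.mk ((J1.map φP ⊓ J2.map φP) ^ n) (φP (X 0 + X 2) * tx) =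
          Ideal.Quotient.mk ((J1.map φP ⊓ J2.map φP) ^ n) (φP (X 0 + X 2) * ty) := by
        rw [← smul_mk, ← smul_mk]; exact hxy
      have hd : φP (X 0 + X 2) * (tx - ty) ∈ (J1.map φP ⊓ J2.map φP) ^ n := by
        have h' := Ideal.Quotient.eq.mp hxy'
        rwa [show φP (X 0 + X 2) * (tx - ty) =
          φP (X 0 + X 2) * tx - φP (X 0 + X 2) * ty by ring]
      exact Ideal.Quotient.eq.mpr (xz_regular_aux P hP n _ hd)
    · exact RingTheory.Sequence.IsWeaklyRegular.nil _ _
  · intro htop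
    have h1 : Ideal.Quotient.mk ((J1.map φP ⊓ J2.map φP) ^ n) 1 ∈
        Ideal.ofList [φP (X 0 + X 2)] •
          (⊤ : Submodule Rl (Rl ⧸ (J1.map φP ⊓ J2.map φP) ^ n)) :=
      htop ▸ Submodule.mem_top
    rw [Ideal.ofList_singleton, Submodule.ideal_span_singleton_smul] at h1
    have h2 := (quot_mem_smul_top_iff _ _ _).mp h1
    have hle : (J1.map φP ⊓ J2.map φP) ^ n ⊔ Ideal.span {φP (X 0 + X 2)} ≤
        IsLocalRing.maximalIdeal Rl := by
      refine sup_le ?_ ?_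
      · rw [L_eq P n, ← Localization.AtPrime.map_eq_maximalIdeal]
        refine Ideal.map_mono ?_
        intro f hf
        rw [hP]
        exact mIdeal01_one_le_P (mIdeal_anti hn hf.1)
      · rw [Ideal.span_le, Set.singleton_subset_iff]
        exact xz_mem_max P hP
    have h3 : (1 : Rl) ∈ IsLocalRing.maximalIdeal Rl := hle h2
    exact (Ideal.IsMaximal.ne_top (IsLocalRing.maximalIdeal.isMaximal Rl))
      ((Ideal.eq_top_iff_one _).mpr h3)

end Main3

end DepthAux
/-- Depth of the module `M` with respect to the ideal `J`:
the supremum of lengths of `M`-regular sequences with entries in `J`. -/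
noncomputable def idealDepth (R : Type) [CommRing R] (J : Ideal R) (M : Type) [AddCommGroup M]
    [Module R M] : ℕ∞ :=
  sSup {n : ℕ∞ | ∃ rs : List R, (rs.length : ℕ∞) = n ∧ (∀ r ∈ rs, r ∈ J) ∧
    RingTheory.Sequence.IsRegular M rs}

/-- Let `R = ℂ[x,y,z,w]` localized at `(x,y,z,w)` and `I = (x,y) ∩ (z,w)`.  Then for every
`n > 0`, `Iⁿ = (x,y)ⁿ ∩ (z,w)ⁿ` and `depth R/Iⁿ = 1`. -/
theorem depth_of_intersection_powers
    (P : Ideal (MvPolynomial (Fin 4) ℂ))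
    (hP : P = Ideal.span {X 0, X 1, X 2, X 3}) [P.IsPrime] :
    ∀ n : ℕ, 0 < n →
      ((Ideal.span {X 0, X 1} : Ideal (MvPolynomial (Fin 4) ℂ)).map
            (algebraMap _ (Localization.AtPrime P)) ⊓
          (Ideal.span {X 2, X 3} : Ideal (MvPolynomial (Fin 4) ℂ)).map
            (algebraMap _ (Localization.AtPrime P))) ^ n =
        ((Ideal.span {X 0, X 1} : Ideal (MvPolynomial (Fin 4) ℂ)).map
            (algebraMap _ (Localization.AtPrime P))) ^ n ⊓
          ((Ideal.span {X 2, X 3} : Ideal (MvPolynomial (Fin 4) ℂ)).map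
            (algebraMap _ (Localization.AtPrime P))) ^ n ∧
      idealDepth (Localization.AtPrime P) (maximalIdeal _)
        (Localization.AtPrime P ⧸
          ((Ideal.span {X 0, X 1} : Ideal (MvPolynomial (Fin 4) ℂ)).map
              (algebraMap _ (Localization.AtPrime P)) ⊓
            (Ideal.span {X 2, X 3} : Ideal (MvPolynomial (Fin 4) ℂ)).map
              (algebraMap _ (Localization.AtPrime P))) ^ n) = 1 := by
  intro n hn
  constructor
  · exact DepthAux.part1_loc P n
  · refine le_antisymm ?_ ?_
    · refine sSup_le ?_
      rintro b ⟨rs, hlen, hmem, hreg⟩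
      rw [← hlen]
      rcases rs with _ | ⟨r1, _ | ⟨r2, rest⟩⟩
      · simp
      · simp
      · exfalso
        rw [RingTheory.Sequence.isRegular_cons_iff] at hreg
        obtain ⟨h1, hreg2⟩ := hreg
        rw [RingTheory.Sequence.isRegular_cons_iff] at hreg2
        exact DepthAux.no_two P hP hn r1 r2 (hmem r1 (by simp)) (hmem r2 (by simp)) h1 hreg2.1
    · refine le_sSup ?_
      refine ⟨[algebraMap (MvPolynomial (Fin 4) ℂ) (Localization.AtPrime P) (X 0 + X 2)], by simp, ?_, ?_⟩
      · intro r hr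
        rw [List.mem_singleton] at hr
        subst hr
        exact DepthAux.xz_mem_max P hP
      · exact DepthAux.xz_isRegular P hP hn
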